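/- arXiv:2601.03387 — 5 statements merged into one kernel-verified Lean document; each statement's English description precedes it below -/
import Mathlib

section
/- Let N ≥ 1 and let W_1,…,W_N be i.i.d. Exp(1) random variables and θ_1,…,θ_N be i.i.d. U(−π/4, π/4) random variables, with all 2N variables mutually independent. Define Z_i = √(2 W_i) · cos(θ_i + π/4), Z̃_i = √(2 W_i) · sin(θ_i + π/4), T = N^{−1/2} Σ_{i=1}^N Z_i and T̃ = N^{−1/2} Σ_{i=1}^N Z̃_i. Then for every ρ > 0, 1 − E[(1 − Q(√ρ · T))·(1 − Q(√ρ · T̃))] = 2·E[Q(√ρ · T)] − (E[Q(√ρ · T)])². (Exact SEP formula of Proposition 1 for the QPSK-modulated 2-bit phase-quantized SIMO-MRC system.) -/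
open MeasureTheory ProbabilityTheory Real Filter Asymptotics

/-- The Gaussian Q-function `Q(x) = (1/√(2π)) ∫_x^∞ e^{−t²/2} dt`. -/
noncomputable def gaussQ (x : ℝ) : ℝ :=
  (Real.sqrt (2 * Real.pi))⁻¹ * ∫ t in Set.Ioi x, Real.exp (-t ^ 2 / 2)

/-- The uniform probability measure on the open interval `(a, b)`. -/
noncomputable def unifOn (a b : ℝ) : Measure ℝ :=
  (ENNReal.ofReal (b - a))⁻¹ • (volume.restrict (Set.Ioo a b))

/-!
In the coordinates `r = √(2w)`, `φ = t + π/4` the map `(w, t) ↦ (r cos φ, r sin φ)` has Jacobian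
`1` (since `r dr = dw`), so it carries the density `(2/π) e^{-w}` of `Exp(1) ⊗ U(-π/4, π/4)` to the
density `(2/π) e^{-(x² + y²)/2}` on the open quadrant. That density factors: each `(Zᵢ, Z̃ᵢ)` is a
pair of independent half-normal variables. Hence `T` and `T̃` are independent with the same law,
and `E[(1 - Q(√ρ T))(1 - Q(√ρ T̃))] = (1 - E[Q(√ρ T)])²`.
-/

open Set
open scoped ENNReal

lemma gaussQ_eq_measureReal_Ioi (x : ℝ) : gaussQ x = (gaussianReal 0 1).real (Ioi x) := by
  rw [measureReal_def, gaussianReal_apply_eq_integral _ one_ne_zero,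
    ENNReal.toReal_ofReal
      (setIntegral_nonneg measurableSet_Ioi fun _ _ ↦ gaussianPDFReal_nonneg ..),
    gaussQ, ← integral_const_mul]
  simp [gaussianPDFReal]

lemma gaussQ_antitone : Antitone gaussQ := fun x y hxy ↦ by
  simp only [gaussQ_eq_measureReal_Ioi]
  exact measureReal_mono (Ioi_subset_Ioi hxy)

@[fun_prop]
lemma measurable_gaussQ : Measurable gaussQ := gaussQ_antitone.measurable

lemma abs_gaussQ_le_one (x : ℝ) : |gaussQ x| ≤ 1 := by
  rw [gaussQ_eq_measureReal_Ioi, abs_of_nonneg measureReal_nonneg]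
  exact measureReal_le_one

lemma unifOn_eq_withDensity (a b : ℝ) :
    unifOn a b = (volume.restrict (Ioo a b)).withDensity fun _ ↦ (ENNReal.ofReal (b - a))⁻¹ :=
  (withDensity_const _).symm

lemma isProbabilityMeasure_unifOn {a b : ℝ} (hab : a < b) : IsProbabilityMeasure (unifOn a b) := by
  constructor
  rw [unifOn, Measure.smul_apply, Measure.restrict_apply_univ, Real.volume_Ioo, smul_eq_mul,
    ENNReal.inv_mul_cancel (by simpa using hab) ENNReal.ofReal_ne_top]

lemma expMeasure_one_eq_withDensity :
    expMeasure 1 = (volume.restrict (Ioi 0)).withDensity fun w ↦ ENNReal.ofReal (exp (-w)) := by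
  calc expMeasure 1 = volume.withDensity (exponentialPDF 1) := rfl
    _ = volume.withDensity ((Ici 0).indicator fun w ↦ ENNReal.ofReal (exp (-w))) := by
      refine congrArg _ (funext fun w ↦ ?_)
      by_cases hw : 0 ≤ w <;> simp [exponentialPDF_eq, hw]
    _ = _ := by
      rw [withDensity_indicator measurableSet_Ici, Measure.restrict_congr_set Ioi_ae_eq_Ici]

noncomputable def halfNormalPDF (x : ℝ) : ℝ≥0∞ := ENNReal.ofReal (√(2 / π) * exp (-x ^ 2 / 2))

lemma measurable_halfNormalPDF : Measurable halfNormalPDF := by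
  unfold halfNormalPDF; fun_prop

noncomputable def halfNormal : Measure ℝ := (volume.restrict (Ioi 0)).withDensity halfNormalPDF

instance : SFinite halfNormal := by unfold halfNormal; infer_instance

lemma halfNormalPDF_mul (x y : ℝ) :
    halfNormalPDF x * halfNormalPDF y = ENNReal.ofReal (2 / π * exp (-(x ^ 2 + y ^ 2) / 2)) := by
  rw [halfNormalPDF, halfNormalPDF, ← ENNReal.ofReal_mul (by positivity)]
  congr 1
  calc √(2 / π) * exp (-x ^ 2 / 2) * (√(2 / π) * exp (-y ^ 2 / 2))
      = (√(2 / π) * √(2 / π)) * (exp (-x ^ 2 / 2) * exp (-y ^ 2 / 2)) := by ring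
    _ = _ := by rw [Real.mul_self_sqrt (by positivity), ← exp_add]; ring_nf

lemma halfNormal_prod_halfNormal :
    halfNormal.prod halfNormal = (volume.restrict (Ioi 0 ×ˢ Ioi 0)).withDensity
      fun q ↦ ENNReal.ofReal (2 / π * exp (-(q.1 ^ 2 + q.2 ^ 2) / 2)) := by
  rw [halfNormal, prod_withDensity measurable_halfNormalPDF measurable_halfNormalPDF,
    Measure.prod_restrict, ← Measure.volume_eq_prod]
  simp_rw [halfNormalPDF_mul]

lemma expMeasure_one_prod_unifOn :
    (expMeasure 1).prod (unifOn (-(π / 4)) (π / 4)) =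
      (volume.restrict (Ioi 0 ×ˢ Ioo (-(π / 4)) (π / 4))).withDensity
        fun p ↦ ENNReal.ofReal (2 / π * exp (-p.1)) := by
  rw [expMeasure_one_eq_withDensity, unifOn_eq_withDensity,
    prod_withDensity (by fun_prop) measurable_const, Measure.prod_restrict,
    ← Measure.volume_eq_prod]
  refine congrArg _ (funext fun p ↦ ?_)
  rw [show π / 4 - -(π / 4) = (2 / π)⁻¹ by field_simp; ring,
    ENNReal.ofReal_inv_of_pos (by positivity), inv_inv, ← ENNReal.ofReal_mul (by positivity),
    mul_comm]

noncomputable def boxMuller (p : ℝ × ℝ) : ℝ × ℝ := polarCoord.symm (√(2 * p.1), p.2 + π / 4)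

noncomputable def fderivBoxMuller (p : ℝ × ℝ) : ℝ × ℝ →L[ℝ] ℝ × ℝ :=
  (fderivPolarCoordSymm (√(2 * p.1), p.2 + π / 4)).comp
    (Matrix.toLin (.finTwoProd ℝ) (.finTwoProd ℝ) !![(√(2 * p.1))⁻¹, 0; 0, 1]).toContinuousLinearMap

lemma hasFDerivAt_boxMuller {p : ℝ × ℝ} (hp : 0 < p.1) :
    HasFDerivAt boxMuller (fderivBoxMuller p) p := by
  refine (hasFDerivAt_polarCoord_symm _).comp p ?_
  rw [Matrix.toLin_finTwoProd_toContinuousLinearMap]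
  have hsqrt : HasFDerivAt (fun q : ℝ × ℝ ↦ √(2 * q.1))
      ((√(2 * p.1))⁻¹ • ContinuousLinearMap.fst ℝ ℝ ℝ) p := by
    have hlin : HasFDerivAt (fun q : ℝ × ℝ ↦ 2 * q.1) ((2 : ℝ) • ContinuousLinearMap.fst ℝ ℝ ℝ) p :=
      hasFDerivAt_fst.const_mul 2
    rw [show (√(2 * p.1))⁻¹ • ContinuousLinearMap.fst ℝ ℝ ℝ =
        (1 / (2 * √(2 * p.1))) • (2 : ℝ) • ContinuousLinearMap.fst ℝ ℝ ℝ by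
      rw [smul_smul]; field_simp]
    exact (Real.hasDerivAt_sqrt (by positivity)).comp_hasFDerivAt p hlin
  simpa using hsqrt.prodMk (hasFDerivAt_snd.add_const (π / 4))

lemma det_fderivBoxMuller {p : ℝ × ℝ} (hp : 0 < p.1) : (fderivBoxMuller p).det = 1 := by
  rw [fderivBoxMuller, ContinuousLinearMap.det, ContinuousLinearMap.toLinearMap_comp,
    LinearMap.det_comp, ← ContinuousLinearMap.det, det_fderivPolarCoordSymm,
    LinearMap.coe_toContinuousLinearMap, LinearMap.det_toLin, Matrix.det_fin_two_of]
  have hr : 0 < √(2 * p.1) := by positivity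
  field_simp
  ring

lemma injOn_boxMuller : InjOn boxMuller (Ioi 0 ×ˢ Ioo (-(π / 4)) (π / 4)) := by
  refine polarCoord.symm.injOn.comp ?_ ?_
  · rintro ⟨w, t⟩ ⟨hw, -⟩ ⟨w', t'⟩ ⟨hw', -⟩ h
    simp only [Prod.mk.injEq, add_left_inj] at h
    simp only [mem_Ioi] at hw hw'
    have := congrArg (· ^ 2) h.1
    simp only [sq_sqrt (by positivity : (0 : ℝ) ≤ 2 * w),
      sq_sqrt (by positivity : (0 : ℝ) ≤ 2 * w')] at this
    exact Prod.ext (by linarith) h.2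
  · rintro ⟨w, t⟩ ⟨hw, ht⟩
    simp only [mem_Ioi, mem_Ioo] at hw ht
    refine ⟨by simpa using hw, ?_, ?_⟩ <;> dsimp only <;> linarith [pi_pos]

lemma image_boxMuller : boxMuller '' (Ioi 0 ×ˢ Ioo (-(π / 4)) (π / 4)) = Ioi 0 ×ˢ Ioi 0 := by
  ext ⟨x, y⟩
  constructor
  · rintro ⟨⟨w, t⟩, ⟨hw, ht⟩, h⟩
    rw [← h]
    simp only [mem_Ioi, mem_Ioo] at hw ht
    have hr : 0 < √(2 * w) := by positivity
    exact ⟨mul_pos hr (cos_pos_of_mem_Ioo ⟨by linarith, by linarith⟩),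
      mul_pos hr (sin_pos_of_pos_of_lt_pi (by linarith) (by linarith [pi_pos]))⟩
  · rintro ⟨hx, hy⟩
    simp only [mem_Ioi] at hx hy
    set z : ℂ := Complex.equivRealProd.symm (x, y)
    have harg_pos : 0 < z.arg := lt_of_le_of_ne (Complex.arg_nonneg_iff.2 (by simp [z, hy.le]))
      (fun h ↦ hy.ne' (Complex.arg_eq_zero_iff.1 h.symm).2)
    have harg_lt : z.arg < π / 2 := Complex.arg_lt_pi_div_two_iff.2 (Or.inl (by simpa [z]))
    refine ⟨((x ^ 2 + y ^ 2) / 2, z.arg - π / 4),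
      ⟨(by positivity : (0 : ℝ) < (x ^ 2 + y ^ 2) / 2), (by linarith : -(π / 4) < z.arg - π / 4),
        (by linarith : z.arg - π / 4 < π / 4)⟩, ?_⟩
    have hsrc : (x, y) ∈ polarCoord.source := Or.inl hx
    rw [← polarCoord.left_inv hsrc, boxMuller]
    congr 2
    · congr 1
      ring
    · simp [z]

lemma map_withDensity_comp {α β : Type*} [MeasurableSpace α] [MeasurableSpace β] {μ : Measure α}
    {f : α → β} {g : β → ℝ≥0∞} (hf : Measurable f) (hg : Measurable g) :
    (μ.withDensity (g ∘ f)).map f = (μ.map f).withDensity g := by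
  ext s hs
  rw [Measure.map_apply hf hs, withDensity_apply _ (hf hs), withDensity_apply _ hs,
    setLIntegral_map hs hg hf, Function.comp_def]

@[fun_prop]
lemma measurable_boxMuller : Measurable boxMuller := by
  unfold boxMuller; fun_prop

lemma measurableSet_boxMuller_domain : MeasurableSet (Ioi (0 : ℝ) ×ˢ Ioo (-(π / 4)) (π / 4)) :=
  measurableSet_Ioi.prod measurableSet_Ioo

lemma map_boxMuller_volume :
    (volume.restrict (Ioi 0 ×ˢ Ioo (-(π / 4)) (π / 4))).map boxMuller =
      volume.restrict (Ioi 0 ×ˢ Ioi 0) := by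
  have hdet : (fun p ↦ ENNReal.ofReal |(fderivBoxMuller p).det|)
      =ᵐ[volume.restrict (Ioi 0 ×ˢ Ioo (-(π / 4)) (π / 4))] 1 := by
    filter_upwards [ae_restrict_mem measurableSet_boxMuller_domain] with p hp
    simp [det_fderivBoxMuller hp.1]
  rw [← image_boxMuller, ← map_withDensity_abs_det_fderiv_eq_addHaar volume
    measurableSet_boxMuller_domain.nullMeasurableSet
    (fun p hp ↦ (hasFDerivAt_boxMuller hp.1).hasFDerivWithinAt) injOn_boxMuller,
    withDensity_congr_ae hdet, withDensity_one]

lemma map_boxMuller : ((expMeasure 1).prod (unifOn (-(π / 4)) (π / 4))).map boxMuller =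
    halfNormal.prod halfNormal := by
  rw [expMeasure_one_prod_unifOn, halfNormal_prod_halfNormal, ← map_boxMuller_volume,
    ← map_withDensity_comp measurable_boxMuller (by fun_prop)]
  congr 1
  refine withDensity_congr_ae ?_
  filter_upwards [ae_restrict_mem measurableSet_boxMuller_domain] with p hp
  have hw : (0 : ℝ) ≤ 2 * p.1 := by linarith [hp.1.out]
  simp only [Function.comp_apply, boxMuller, polarCoord_symm_apply, mul_pow, ← mul_add,
    cos_sq_add_sin_sq, sq_sqrt hw]
  ring_nf

lemma isProbabilityMeasure_halfNormal : IsProbabilityMeasure halfNormal := by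
  have : IsProbabilityMeasure (unifOn (-(π / 4)) (π / 4)) :=
    isProbabilityMeasure_unifOn (by linarith [pi_pos])
  have : IsProbabilityMeasure (expMeasure 1) := isProbabilityMeasure_expMeasure one_pos
  have hsq : halfNormal univ ^ 2 = 1 ^ 2 := by
    rw [sq, ← Measure.prod_prod, univ_prod_univ, ← map_boxMuller,
      Measure.map_apply measurable_boxMuller MeasurableSet.univ, preimage_univ, measure_univ,
      one_pow]
  exact ⟨(ENNReal.pow_right_strictMono two_ne_zero).injective hsq⟩

lemma map_fun_prod_eq_pi_prod {Ω ι α : Type*} [MeasurableSpace Ω] [MeasurableSpace α] [Fintype ι]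
    {P : Measure Ω} {μ ν : ι → Measure α} [∀ i, SigmaFinite (μ i)] [∀ i, SigmaFinite (ν i)]
    {X Y : ι → Ω → α} (hX : ∀ i, Measurable (X i)) (hY : ∀ i, Measurable (Y i))
    (hXY : iIndepFun (Sum.elim X Y) P) (hXlaw : ∀ i, P.map (X i) = μ i)
    (hYlaw : ∀ i, P.map (Y i) = ν i) :
    P.map (fun ω i ↦ (X i ω, Y i ω)) = Measure.pi fun i ↦ (μ i).prod (ν i) := by
  have : ∀ j, SigmaFinite (Sum.elim μ ν j) := Sum.forall.2 ⟨‹_›, ‹_›⟩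
  have hXY_meas : ∀ j, Measurable (Sum.elim X Y j) := Sum.forall.2 ⟨hX, hY⟩
  have hjoint : P.map (fun ω j ↦ Sum.elim X Y j ω) = Measure.pi (Sum.elim μ ν) := by
    rw [hXY.map_fun_eq_pi_map fun j ↦ (hXY_meas j).aemeasurable]
    congr 1
    funext j
    cases j <;> simp [hXlaw, hYlaw]
  have hregroup := ((measurePreserving_arrowProdEquivProdArrow α α ι μ ν).symm _).comp
    (measurePreserving_sumPiEquivProdPi (Sum.elim μ ν))
  rw [← hregroup.map_eq, ← hjoint,
    Measure.map_map hregroup.measurable (measurable_pi_lambda _ hXY_meas)]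
  rfl

lemma map_pi_prod_eq_prod_map_pi {ι α β γ δ : Type*} [Fintype ι] [MeasurableSpace α]
    [MeasurableSpace β] [MeasurableSpace γ] [MeasurableSpace δ]
    (μ : ι → Measure α) (ν : ι → Measure β) [∀ i, SigmaFinite (μ i)] [∀ i, SigmaFinite (ν i)]
    {f : (ι → α) → γ} {g : (ι → β) → δ} (hf : Measurable f) (hg : Measurable g) :
    (Measure.pi fun i ↦ (μ i).prod (ν i)).map (fun v ↦ (f fun i ↦ (v i).1, g fun i ↦ (v i).2)) =
      ((Measure.pi μ).map f).prod ((Measure.pi ν).map g) := by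
  rw [Measure.map_prod_map _ _ hf hg,
    ← (measurePreserving_arrowProdEquivProdArrow α β ι μ ν).map_eq,
    Measure.map_map (hf.prodMap hg) (MeasurableEquiv.measurable _)]
  rfl

lemma integral_one_sub_mul_one_sub_of_map_eq_prod {Ω α : Type*} [MeasurableSpace Ω]
    [MeasurableSpace α] {P : Measure Ω} [IsProbabilityMeasure P] {m : Measure α}
    [IsProbabilityMeasure m] {X Y : Ω → α} (hX : Measurable X) (hY : Measurable Y)
    (hXY : P.map (fun ω ↦ (X ω, Y ω)) = m.prod m) {q : α → ℝ} (hq : Measurable q)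
    (hqm : Integrable q m) :
    ∫ ω, (1 - q (X ω)) * (1 - q (Y ω)) ∂P = (1 - ∫ ω, q (X ω) ∂P) ^ 2 := by
  have hXlaw : P.map X = m := by
    rw [← Measure.fst_prod (μ := m) (ν := m), ← hXY, Measure.fst,
      Measure.map_map measurable_fst (hX.prodMk hY)]
    rfl
  have hq₂ : Measurable fun p : α × α ↦ (1 - q p.1) * (1 - q p.2) := by fun_prop
  rw [← integral_map hX.aemeasurable hq.aestronglyMeasurable, hXlaw,
    ← integral_map (hX.prodMk hY).aemeasurable hq₂.aestronglyMeasurable, hXY,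
    integral_prod_mul (fun x ↦ 1 - q x) (fun y ↦ 1 - q y), integral_sub (integrable_const 1) hqm,
    integral_const, probReal_univ, one_smul, sq]

lemma integrable_gaussQ_comp_mul {m : Measure ℝ} [IsFiniteMeasure m] (c : ℝ) :
    Integrable (fun x ↦ gaussQ (c * x)) m :=
  .of_bound (by fun_prop : Measurable fun x ↦ gaussQ (c * x)).aestronglyMeasurable 1
    (ae_of_all _ fun x ↦ abs_gaussQ_le_one (c * x))

theorem stmt1_general
    {Ω : Type*} [MeasurableSpace Ω] (P : Measure Ω) [IsProbabilityMeasure P]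
    (N : ℕ)
    (W θ : Fin N → Ω → ℝ)
    (hWmeas : ∀ i, Measurable (W i)) (hθmeas : ∀ i, Measurable (θ i))
    (hWlaw : ∀ i, Measure.map (W i) P = expMeasure 1)
    (hθlaw : ∀ i, Measure.map (θ i) P = unifOn (-(π / 4)) (π / 4))
    (hindep : iIndepFun (Sum.elim W θ) P)
    (T Tt : Ω → ℝ)
    (hT : T = fun ω => (Real.sqrt N)⁻¹ * ∑ i, Real.sqrt (2 * W i ω) * Real.cos (θ i ω + π / 4))
    (hTt : Tt = fun ω => (Real.sqrt N)⁻¹ * ∑ i, Real.sqrt (2 * W i ω) * Real.sin (θ i ω + π / 4))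
    (ρ : ℝ) :
    1 - ∫ ω, (1 - gaussQ (Real.sqrt ρ * T ω)) * (1 - gaussQ (Real.sqrt ρ * Tt ω)) ∂P
      = 2 * (∫ ω, gaussQ (Real.sqrt ρ * T ω) ∂P)
        - (∫ ω, gaussQ (Real.sqrt ρ * T ω) ∂P) ^ 2 := by
  have := isProbabilityMeasure_halfNormal
  have := isProbabilityMeasure_expMeasure one_pos
  have := isProbabilityMeasure_unifOn (by linarith [pi_pos] : -(π / 4) < π / 4)
  set avg : (Fin N → ℝ) → ℝ := fun v ↦ (√N)⁻¹ * ∑ i, v i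
  set m := (Measure.pi fun _ : Fin N ↦ halfNormal).map avg
  have hlaw : P.map (fun ω ↦ (T ω, Tt ω)) = m.prod m := by
    have hboxMuller : MeasurePreserving (fun v i ↦ boxMuller (v i))
        (Measure.pi fun _ : Fin N ↦ (expMeasure 1).prod (unifOn (-(π / 4)) (π / 4)))
        (Measure.pi fun _ ↦ halfNormal.prod halfNormal) :=
      measurePreserving_pi _ _ fun _ ↦ ⟨measurable_boxMuller, map_boxMuller⟩
    rw [← map_pi_prod_eq_prod_map_pi _ _ (by fun_prop) (by fun_prop), ← hboxMuller.map_eq,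
      ← map_fun_prod_eq_pi_prod hWmeas hθmeas hindep hWlaw hθlaw,
      Measure.map_map (by fun_prop) (by fun_prop), Measure.map_map (by fun_prop) (by fun_prop)]
    subst hT hTt
    rfl
  have : IsProbabilityMeasure m := Measure.isProbabilityMeasure_map (by fun_prop)
  rw [integral_one_sub_mul_one_sub_of_map_eq_prod (by subst hT; fun_prop) (by subst hTt; fun_prop)
    hlaw (q := fun x ↦ gaussQ (√ρ * x)) (by fun_prop) (integrable_gaussQ_comp_mul _)]
  ring

/-- Exact SEP formula for the QPSK-modulated 2-bit phase-quantized SIMO-MRC system. -/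
theorem stmt1
    {Ω : Type*} [MeasurableSpace Ω] (P : Measure Ω) [IsProbabilityMeasure P]
    (N : ℕ) (hN : 1 ≤ N)
    (W θ : Fin N → Ω → ℝ)
    (hWmeas : ∀ i, Measurable (W i)) (hθmeas : ∀ i, Measurable (θ i))
    (hWlaw : ∀ i, Measure.map (W i) P = expMeasure 1)
    (hθlaw : ∀ i, Measure.map (θ i) P = unifOn (-(π / 4)) (π / 4))
    (hindep : iIndepFun (Sum.elim W θ) P)
    (T Tt : Ω → ℝ)
    (hT : T = fun ω => (Real.sqrt N)⁻¹ * ∑ i, Real.sqrt (2 * W i ω) * Real.cos (θ i ω + π / 4))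
    (hTt : Tt = fun ω => (Real.sqrt N)⁻¹ * ∑ i, Real.sqrt (2 * W i ω) * Real.sin (θ i ω + π / 4))
    (ρ : ℝ) (hρ : 0 < ρ) :
    1 - ∫ ω, (1 - gaussQ (Real.sqrt ρ * T ω)) * (1 - gaussQ (Real.sqrt ρ * Tt ω)) ∂P
      = 2 * (∫ ω, gaussQ (Real.sqrt ρ * T ω) ∂P)
        - (∫ ω, gaussQ (Real.sqrt ρ * T ω) ∂P) ^ 2 :=
  stmt1_general P N W θ hWmeas hθmeas hWlaw hθlaw hindep T Tt hT hTt ρ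
end

section
/- Let n ≥ 1 be an integer, let W be an Exp(1) random variable and θ an independent U(−π/2^n, π/2^n) random variable, and set Z = √(2W) · cos(θ + π/4) and Z̃ = √(2W) · sin(θ + π/4). Then Cov(Z, Z̃) = (2^n/π) · sin(π/2^n) · ( cos(π/2^n) − 2^{n−2} · sin(π/2^n) ). In particular, if n ≠ 2 then Cov(Z, Z̃) ≠ 0, so Z and Z̃ are not independent. (Converse direction of Lemma 1: Z and Z̃ are independent only when n = 2.) -/
open MeasureTheory ProbabilityTheory Real

/-!
By independence every moment of `Z`, `Z̃` and `Z Z̃` factors into a Gamma integral in `W` times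
an elementary trigonometric integral in `θ`. With `a = π / 2 ^ n` this gives
`E[Z Z̃] = sin (2a) / (2a)` and `E[Z] = E[Z̃] = √π sin a / (2a)`, so the covariance is
`sin a (4a cos a - π sin a) / (4a²)`. The bracket vanishes at `a = π / 4`, equals `-π` at
`a = π / 2`, and is positive for `a ≤ π / 8` because `sin a < a` and `cos a ≥ √3 / 2 > π / 4`.
-/

lemma integral_expMeasure {r : ℝ} (hr : 0 ≤ r) (g : ℝ → ℝ) :
    ∫ x, g x ∂expMeasure r = ∫ x in Set.Ioi 0, r * exp (-(r * x)) * g x := by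
  have hpdf (x : ℝ) : (gammaPDFReal 1 r x).toNNReal • g x
      = (Set.Ici 0).indicator (fun x => r * exp (-(r * x)) * g x) x := by
    by_cases hx : 0 ≤ x
    · simp [gammaPDFReal, hx, NNReal.smul_def, Or.inl (by positivity : 0 ≤ r * exp (-(r * x)))]
    · simp [gammaPDFReal, hx]
  change ∫ x, g x ∂volume.withDensity (fun x => ((gammaPDFReal 1 r x).toNNReal : ENNReal)) = _
  rw [integral_withDensity_eq_integral_smul
    (measurable_gammaPDFReal 1 r).real_toNNReal, funext hpdf,
    integral_indicator measurableSet_Ici, integral_Ici_eq_integral_Ioi]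

lemma integral_unifOn {a b : ℝ} (hab : a ≤ b) (g : ℝ → ℝ) :
    ∫ x, g x ∂unifOn a b = (b - a)⁻¹ * ∫ x in a..b, g x := by
  rw [unifOn, integral_smul_measure, ENNReal.toReal_inv, ENNReal.toReal_ofReal (sub_nonneg.2 hab),
    intervalIntegral.integral_of_le hab, integral_Ioc_eq_integral_Ioo, smul_eq_mul]

lemma integral_sqrt_two_mul_expMeasure_one :
    ∫ x, √(2 * x) ∂expMeasure 1 = √π / √2 := by
  have hΓ : Gamma (3 / 2) = √π / 2 := by
    rw [show (3 / 2 : ℝ) = 1 / 2 + 1 by norm_num, Gamma_add_one (by norm_num), Gamma_one_half_eq]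
    ring
  simp only [integral_expMeasure zero_le_one, one_mul]
  calc ∫ x in Set.Ioi 0, exp (-x) * √(2 * x)
      = ∫ x in Set.Ioi 0, √2 * (exp (-x) * x ^ ((3 / 2 : ℝ) - 1)) := by
        refine setIntegral_congr_fun measurableSet_Ioi fun x hx => ?_
        rw [show (3 / 2 : ℝ) - 1 = 1 / 2 by norm_num, ← sqrt_eq_rpow, sqrt_mul zero_le_two]
        ring
    _ = √π / √2 := by
        rw [integral_const_mul, ← Gamma_eq_integral (by norm_num), hΓ]
        field_simp
        rw [sq_sqrt zero_le_two]

lemma integral_sqrt_two_mul_mul_self_expMeasure_one :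
    ∫ x, √(2 * x) * √(2 * x) ∂expMeasure 1 = 2 := by
  simp only [integral_expMeasure zero_le_one, one_mul]
  calc ∫ x in Set.Ioi 0, exp (-x) * (√(2 * x) * √(2 * x))
      = ∫ x in Set.Ioi 0, 2 * (exp (-x) * x ^ ((2 : ℝ) - 1)) := by
        refine setIntegral_congr_fun measurableSet_Ioi fun x (hx : 0 < x) => ?_
        rw [mul_self_sqrt (by positivity), show (2 : ℝ) - 1 = 1 by norm_num, rpow_one]
        ring
    _ = 2 := by rw [integral_const_mul, ← Gamma_eq_integral two_pos, Gamma_two, mul_one]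

lemma integral_cos_add_symmetric (a c : ℝ) :
    ∫ t in -a..a, cos (t + c) = 2 * sin a * cos c := by
  rw [intervalIntegral.integral_comp_add_right cos, integral_cos, sin_add, sin_add, sin_neg,
    cos_neg]
  ring

lemma integral_sin_add_symmetric (a c : ℝ) :
    ∫ t in -a..a, sin (t + c) = 2 * sin a * sin c := by
  rw [intervalIntegral.integral_comp_add_right sin, integral_sin, cos_add, cos_add, sin_neg,
    cos_neg]
  ring

lemma integral_cos_add_mul_sin_add_symmetric (a c : ℝ) :
    ∫ t in -a..a, cos (t + c) * sin (t + c) = sin (2 * a) * sin (2 * c) / 2 := by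
  have h (t : ℝ) : cos (t + c) * sin (t + c) = sin (2 * t + 2 * c) / 2 := by
    rw [show 2 * t + 2 * c = 2 * (t + c) by ring, sin_two_mul]; ring
  simp only [h]
  rw [intervalIntegral.integral_div, intervalIntegral.integral_comp_mul_add sin two_ne_zero,
    integral_sin, cos_add, cos_add, show 2 * -a = -(2 * a) by ring, sin_neg, cos_neg, smul_eq_mul]
  ring

lemma ProbabilityTheory.IndepFun.integral_comp_mul_comp_eq {Ω α β : Type*} [MeasurableSpace Ω]
    [MeasurableSpace α] [MeasurableSpace β] {P : Measure Ω} {X : Ω → α} {Y : Ω → β}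
    {μ : Measure α} {ν : Measure β} {f : α → ℝ} {g : β → ℝ} (hXY : IndepFun X Y P)
    (hX : Measurable X) (hY : Measurable Y) (hXlaw : P.map X = μ) (hYlaw : P.map Y = ν)
    (hf : Measurable f) (hg : Measurable g) :
    ∫ ω, f (X ω) * g (Y ω) ∂P = (∫ x, f x ∂μ) * ∫ y, g y ∂ν := by
  subst hXlaw hYlaw
  rw [integral_map hX.aemeasurable hf.aestronglyMeasurable,
    integral_map hY.aemeasurable hg.aestronglyMeasurable]
  exact (hXY.comp hf hg).integral_mul_eq_mul_integral (hf.comp hX).aestronglyMeasurable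
    (hg.comp hY).aestronglyMeasurable

lemma integral_mul_sub_mul_integral_polar_eq {Ω : Type*} [MeasurableSpace Ω] {P : Measure Ω}
    {W θ : Ω → ℝ} {a : ℝ} (ha : 0 < a) (hW : Measurable W) (hθ : Measurable θ)
    (hWlaw : P.map W = expMeasure 1) (hθlaw : P.map θ = unifOn (-a) a) (hWθ : IndepFun W θ P) :
    ∫ ω, √(2 * W ω) * cos (θ ω + π / 4) * (√(2 * W ω) * sin (θ ω + π / 4)) ∂P
      - (∫ ω, √(2 * W ω) * cos (θ ω + π / 4) ∂P) * ∫ ω, √(2 * W ω) * sin (θ ω + π / 4) ∂P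
      = sin a * (4 * a * cos a - π * sin a) / (4 * a ^ 2) := by
  have hunif := integral_unifOn (neg_le_self ha.le)
  have hprod : ∫ ω, √(2 * W ω) * cos (θ ω + π / 4) * (√(2 * W ω) * sin (θ ω + π / 4)) ∂P
      = 2 * ((a - -a)⁻¹ * (sin (2 * a) * sin (2 * (π / 4)) / 2)) := by
    simp_rw [fun ω => mul_mul_mul_comm (√(2 * W ω)) (cos (θ ω + π / 4))]
    rw [hWθ.integral_comp_mul_comp_eq (f := fun x => √(2 * x) * √(2 * x))
      (g := fun t => cos (t + π / 4) * sin (t + π / 4)) hW hθ hWlaw hθlaw (by fun_prop)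
      (by fun_prop),
      integral_sqrt_two_mul_mul_self_expMeasure_one, hunif, integral_cos_add_mul_sin_add_symmetric]
  have hcos : ∫ ω, √(2 * W ω) * cos (θ ω + π / 4) ∂P
      = √π / √2 * ((a - -a)⁻¹ * (2 * sin a * cos (π / 4))) := by
    rw [hWθ.integral_comp_mul_comp_eq (f := fun x => √(2 * x)) (g := fun t => cos (t + π / 4))
      hW hθ hWlaw hθlaw (by fun_prop) (by fun_prop),
      integral_sqrt_two_mul_expMeasure_one, hunif, integral_cos_add_symmetric]
  have hsin : ∫ ω, √(2 * W ω) * sin (θ ω + π / 4) ∂P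
      = √π / √2 * ((a - -a)⁻¹ * (2 * sin a * sin (π / 4))) := by
    rw [hWθ.integral_comp_mul_comp_eq (f := fun x => √(2 * x)) (g := fun t => sin (t + π / 4))
      hW hθ hWlaw hθlaw (by fun_prop) (by fun_prop),
      integral_sqrt_two_mul_expMeasure_one, hunif, integral_sin_add_symmetric]
  rw [hprod, hcos, hsin, cos_pi_div_four, sin_pi_div_four, show 2 * (π / 4) = π / 2 by ring,
    sin_pi_div_two, sin_two_mul]
  field_simp
  rw [sq_sqrt pi_pos.le]
  ring

lemma pi_mul_sin_lt_four_mul_mul_cos {a : ℝ} (ha : 0 < a) (ha' : a ≤ π / 8) :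
    π * sin a < 4 * a * cos a := by
  have hcos : √3 / 2 ≤ cos a := by
    rw [← cos_pi_div_six]
    exact cos_le_cos_of_nonneg_of_le_pi ha.le (by linarith [pi_pos]) (by linarith [pi_pos])
  have hsqrt3 : 1.7 < √3 := by
    rw [lt_sqrt (by norm_num)]
    norm_num
  calc π * sin a < π * a := mul_lt_mul_of_pos_left (sin_lt ha) pi_pos
    _ ≤ 4 * a * cos a := by nlinarith [pi_lt_d2]

lemma four_mul_mul_cos_sub_pi_mul_sin_ne_zero {n : ℕ} (hn : 1 ≤ n) (hn2 : n ≠ 2) :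
    4 * (π / 2 ^ n) * cos (π / 2 ^ n) - π * sin (π / 2 ^ n) ≠ 0 := by
  obtain rfl | hn3 : n = 1 ∨ 3 ≤ n := by omega
  · simp [pi_ne_zero]
  · refine (sub_pos.2 (pi_mul_sin_lt_four_mul_mul_cos (by positivity) ?_)).ne'
    calc π / 2 ^ n ≤ π / 2 ^ 3 := by gcongr; norm_num
      _ = π / 8 := by norm_num

theorem stmt7_general
    {Ω : Type*} [MeasurableSpace Ω] (P : Measure Ω)
    (n : ℕ) (hn : 1 ≤ n)
    (W θ : Ω → ℝ) (hW : Measurable W) (hθ : Measurable θ)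
    (hWlaw : Measure.map W P = expMeasure 1)
    (hθlaw : Measure.map θ P = unifOn (-(π / 2 ^ n)) (π / 2 ^ n))
    (hindep : IndepFun W θ P)
    (Z Zt : Ω → ℝ)
    (hZ : Z = fun ω => Real.sqrt (2 * W ω) * Real.cos (θ ω + π / 4))
    (hZt : Zt = fun ω => Real.sqrt (2 * W ω) * Real.sin (θ ω + π / 4)) :
    ((∫ ω, Z ω * Zt ω ∂P) - (∫ ω, Z ω ∂P) * (∫ ω, Zt ω ∂P)
        = (2 ^ n / π) * Real.sin (π / 2 ^ n)
          * (Real.cos (π / 2 ^ n) - (2 : ℝ) ^ ((n : ℤ) - 2) * Real.sin (π / 2 ^ n)))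
    ∧ (n ≠ 2 →
        ((∫ ω, Z ω * Zt ω ∂P) - (∫ ω, Z ω ∂P) * (∫ ω, Zt ω ∂P) ≠ 0 ∧ ¬ IndepFun Z Zt P)) := by
  subst hZ hZt
  have hcov := integral_mul_sub_mul_integral_polar_eq (by positivity) hW hθ hWlaw hθlaw hindep
  have hclosed : sin (π / 2 ^ n) * (4 * (π / 2 ^ n) * cos (π / 2 ^ n) - π * sin (π / 2 ^ n))
        / (4 * (π / 2 ^ n) ^ 2)
      = 2 ^ n / π * sin (π / 2 ^ n) * (cos (π / 2 ^ n) - 2 ^ ((n : ℤ) - 2) * sin (π / 2 ^ n)) := by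
    rw [zpow_sub₀ two_ne_zero, zpow_natCast]
    field_simp
    ring
  refine ⟨hcov.trans hclosed, fun hn2 => ?_⟩
  have hsin : 0 < sin (π / 2 ^ n) := by
    refine sin_pos_of_pos_of_lt_pi (by positivity) (div_lt_self pi_pos ?_)
    exact one_lt_pow₀ one_lt_two (by omega)
  have hne : ∫ ω, √(2 * W ω) * cos (θ ω + π / 4) * (√(2 * W ω) * sin (θ ω + π / 4)) ∂P
      - (∫ ω, √(2 * W ω) * cos (θ ω + π / 4) ∂P) * ∫ ω, √(2 * W ω) * sin (θ ω + π / 4) ∂P ≠ 0 := by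
    rw [hcov]
    exact div_ne_zero (mul_ne_zero hsin.ne' (four_mul_mul_cos_sub_pi_mul_sin_ne_zero hn hn2))
      (by positivity)
  refine ⟨hne, fun hZZt => hne (sub_eq_zero.2 ?_)⟩
  exact hZZt.integral_mul_eq_mul_integral (by fun_prop) (by fun_prop)

/-- Converse direction of Lemma 1: covariance of `Z` and `Z̃`, nonzero for `n ≠ 2`,
so `Z` and `Z̃` are independent only when `n = 2`. -/
theorem stmt7
    {Ω : Type*} [MeasurableSpace Ω] (P : Measure Ω) [IsProbabilityMeasure P]
    (n : ℕ) (hn : 1 ≤ n)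
    (W θ : Ω → ℝ) (hW : Measurable W) (hθ : Measurable θ)
    (hWlaw : Measure.map W P = expMeasure 1)
    (hθlaw : Measure.map θ P = unifOn (-(π / 2 ^ n)) (π / 2 ^ n))
    (hindep : IndepFun W θ P)
    (Z Zt : Ω → ℝ)
    (hZ : Z = fun ω => Real.sqrt (2 * W ω) * Real.cos (θ ω + π / 4))
    (hZt : Zt = fun ω => Real.sqrt (2 * W ω) * Real.sin (θ ω + π / 4)) :
    ((∫ ω, Z ω * Zt ω ∂P) - (∫ ω, Z ω ∂P) * (∫ ω, Zt ω ∂P)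
        = (2 ^ n / π) * Real.sin (π / 2 ^ n)
          * (Real.cos (π / 2 ^ n) - (2 : ℝ) ^ ((n : ℤ) - 2) * Real.sin (π / 2 ^ n)))
    ∧ (n ≠ 2 →
        ((∫ ω, Z ω * Zt ω ∂P) - (∫ ω, Z ω ∂P) * (∫ ω, Zt ω ∂P) ≠ 0 ∧ ¬ IndepFun Z Zt P)) :=
  stmt7_general P n hn W θ hW hθ hWlaw hθlaw hindep Z Zt hZ hZt
end

section
/- Let W be an Exp(1) random variable and θ an independent U(−π/4, π/4) random variable. Then for every v ≥ 0, P( W·(1 − |sin 2θ|) ≤ v ) = 1 − 4·(Q(√v))². (Distribution of the per-branch selection statistic V_i = |h_i|²(1 − |sin 2θ̃_i|) used for selection combining, equation (T_distr).) -/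
open MeasureTheory ProbabilityTheory Real

open Set

/-!
Conditioning on `θ`, `P(V ≤ v) = 1 - E[exp(-v / (1 - |sin 2θ|))]`, because `W` is `Exp(1)`.
On the other side, `Q(x)²` is the standard Gaussian mass of the quadrant `{s > x, t > x}`.
In polar coordinates the ray at angle `φ ∈ (0, π/2)` enters this quadrant at radius
`x / min(cos φ, sin φ)`, and `∫_c^∞ r e^{-r²/2} dr = e^{-c²/2}`; the substitution `φ = t + π/4`,
under which `2 min(cos φ, sin φ)² = 1 - |sin 2t|`, then gives Craig's formula
`Q(x)² = (2π)⁻¹ ∫_{-π/4}^{π/4} exp(-x² / (1 - |sin 2t|)) dt`, so `4 Q(√v)²` is exactly that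
expectation.
-/

lemma integral_Ioi_mul_exp_neg_sq_div_two (c : ℝ) :
    ∫ r in Ioi c, r * exp (-r ^ 2 / 2) = exp (-c ^ 2 / 2) := by
  have hderiv : ∀ r ∈ Ici c, HasDerivAt (fun r ↦ -exp (-r ^ 2 / 2)) (r * exp (-r ^ 2 / 2)) r :=
    fun r _ ↦
      ((hasDerivAt_pow 2 r).fun_neg.div_const 2).exp.fun_neg.congr_deriv (by push_cast; ring)
  have hint : IntegrableOn (fun r ↦ r * exp (-r ^ 2 / 2)) (Ioi c) := by
    convert (integrable_mul_exp_neg_mul_sq (b := 1 / 2) one_half_pos).integrableOn using 4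
    ring
  have hlim : Filter.Tendsto (fun r ↦ -exp (-r ^ 2 / 2)) Filter.atTop (nhds 0) := by
    simpa [neg_div] using (tendsto_exp_neg_atTop_nhds_zero.comp
      ((Filter.tendsto_pow_atTop two_ne_zero).atTop_div_const two_pos)).neg
  rw [integral_Ioi_of_hasDerivAt_of_tendsto' hderiv hint hlim, zero_sub, neg_neg]

lemma integral_Ioi_zero_indicator_lt_mul {x : ℝ} (hx : 0 ≤ x) (m : ℝ) :
    ∫ r in Ioi 0, {r | x < r * m}.indicator (fun r ↦ r * exp (-r ^ 2 / 2)) r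
      = if 0 < m then exp (-x ^ 2 / (2 * m ^ 2)) else 0 := by
  rw [setIntegral_indicator (measurableSet_lt measurable_const (by fun_prop))]
  split_ifs with hm
  · have hset : Ioi 0 ∩ {r | x < r * m} = Ioi (x / m) := by
      ext r
      simp only [mem_inter_iff, mem_Ioi, mem_ofPred_eq, div_lt_iff₀ hm]
      exact ⟨fun h ↦ h.2, fun h ↦ ⟨pos_of_mul_pos_left (hx.trans_lt h) hm.le, h⟩⟩
    rw [hset, integral_Ioi_mul_exp_neg_sq_div_two, div_pow]
    field_simp
  · have hset : Ioi 0 ∩ {r | x < r * m} = ∅ := by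
      ext r
      simp only [mem_inter_iff, mem_Ioi, mem_ofPred_eq, mem_empty_iff_false, iff_false, not_and,
        not_lt]
      exact fun hr ↦ (mul_nonpos_of_nonneg_of_nonpos hr.le (not_lt.mp hm)).trans hx
    rw [hset, Measure.restrict_empty, integral_zero_measure]

lemma polarCoord_symm_mem_Ioi_prod_Ioi_iff {x : ℝ} {p : ℝ × ℝ} (hp : 0 ≤ p.1) :
    polarCoord.symm p ∈ Ioi x ×ˢ Ioi x ↔ x < p.1 * min (cos p.2) (sin p.2) := by
  rw [mul_min_of_nonneg _ _ hp, lt_min_iff]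
  rfl

lemma Ioo_inter_setOf_zero_lt_min_cos_sin :
    Ioo (-π) π ∩ {φ | 0 < min (cos φ) (sin φ)} = Ioo 0 (π / 2) := by
  ext φ
  simp only [mem_inter_iff, mem_Ioo, mem_ofPred_eq, lt_min_iff]
  constructor
  · rintro ⟨⟨hlo, hhi⟩, hcos, hsin⟩
    refine ⟨?_, ?_⟩
    · by_contra! h
      exact (sin_nonpos_of_nonpos_of_neg_pi_le h hlo.le).not_gt hsin
    · by_contra! h
      exact (cos_nonpos_of_pi_div_two_le_of_le h (by linarith)).not_gt hcos
  · rintro ⟨hlo, hhi⟩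
    exact ⟨⟨by linarith [pi_pos], by linarith⟩, cos_pos_of_mem_Ioo ⟨by linarith, hhi⟩,
      sin_pos_of_pos_of_lt_pi hlo (by linarith)⟩

lemma two_mul_min_cos_sin_add_pi_div_four_sq {t : ℝ} (ht : t ∈ Icc (-(π / 4)) (π / 4)) :
    2 * min (cos (t + π / 4)) (sin (t + π / 4)) ^ 2 = 1 - |sin (2 * t)| := by
  have hcos : 0 ≤ cos (t + π / 4) :=
    cos_nonneg_of_mem_Icc ⟨by linarith [ht.1, pi_pos], by linarith [ht.2]⟩
  have hsin : 0 ≤ sin (t + π / 4) :=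
    sin_nonneg_of_nonneg_of_le_pi (by linarith [ht.1]) (by linarith [ht.2, pi_pos])
  have hcos_sq : 2 * cos (t + π / 4) ^ 2 = 1 - sin (2 * t) := by
    rw [cos_sq, show 2 * (t + π / 4) = 2 * t + π / 2 by ring, cos_add_pi_div_two]
    ring
  have hsin_sq : 2 * sin (t + π / 4) ^ 2 = 1 + sin (2 * t) := by
    rw [sin_sq, cos_sq, show 2 * (t + π / 4) = 2 * t + π / 2 by ring, cos_add_pi_div_two]
    ring
  rcases le_total (cos (t + π / 4)) (sin (t + π / 4)) with h | h
  · rw [min_eq_left h, hcos_sq, abs_of_nonneg (by nlinarith)]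
  · rw [min_eq_right h, hsin_sq, abs_of_nonpos (by nlinarith)]
    ring

lemma integral_Ioo_zero_pi_div_two_min_cos_sin_sq (g : ℝ → ℝ) :
    ∫ φ in Ioo 0 (π / 2), g (2 * min (cos φ) (sin φ) ^ 2)
      = ∫ t in Ioo (-(π / 4)) (π / 4), g (1 - |sin (2 * t)|) := by
  have hπ := pi_pos
  simp only [← integral_Ioc_eq_integral_Ioo]
  rw [← intervalIntegral.integral_of_le (by linarith),
    ← intervalIntegral.integral_of_le (by linarith)]
  calc ∫ φ in 0..π / 2, g (2 * min (cos φ) (sin φ) ^ 2)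
      = ∫ t in -(π / 4)..π / 4, g (2 * min (cos (t + π / 4)) (sin (t + π / 4)) ^ 2) := by
        rw [intervalIntegral.integral_comp_add_right (fun φ ↦ g (2 * min (cos φ) (sin φ) ^ 2))]
        congr 1 <;> ring
    _ = ∫ t in -(π / 4)..π / 4, g (1 - |sin (2 * t)|) := by
        refine intervalIntegral.integral_congr fun t ht ↦ ?_
        rw [uIcc_of_le (by linarith)] at ht
        simp only [two_mul_min_cos_sin_add_pi_div_four_sq ht]

lemma sq_integral_Ioi_exp_neg_sq_div_two {x : ℝ} (hx : 0 ≤ x) :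
    (∫ t in Ioi x, exp (-t ^ 2 / 2)) ^ 2
      = ∫ t in Ioo (-(π / 4)) (π / 4), exp (-x ^ 2 / (1 - |sin (2 * t)|)) := by
  set A : Set (ℝ × ℝ) := {p | x < p.1 * min (cos p.2) (sin p.2)}
  have hA : MeasurableSet A := measurableSet_lt measurable_const (by fun_prop)
  have cartesian : (∫ t in Ioi x, exp (-t ^ 2 / 2)) ^ 2
      = ∫ p, (Ioi x ×ˢ Ioi x).indicator (fun p ↦ exp (-(p.1 ^ 2 + p.2 ^ 2) / 2)) p := by
    rw [sq, ← integral_prod_mul, Measure.prod_restrict, ← Measure.volume_eq_prod,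
      integral_indicator (measurableSet_Ioi.prod measurableSet_Ioi)]
    simp only [← exp_add]
    ring_nf
  have polar : ∫ p, (Ioi x ×ˢ Ioi x).indicator (fun p ↦ exp (-(p.1 ^ 2 + p.2 ^ 2) / 2)) p
      = ∫ p in Ioi 0 ×ˢ Ioo (-π) π, A.indicator (fun p ↦ p.1 * exp (-p.1 ^ 2 / 2)) p := by
    rw [← integral_comp_polarCoord_symm, polarCoord_target]
    refine setIntegral_congr_fun (measurableSet_Ioi.prod measurableSet_Ioo) fun p hp ↦ ?_
    have hr : 0 ≤ p.1 := le_of_lt hp.1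
    simp only [indicator, polarCoord_symm_mem_Ioi_prod_Ioi_iff hr, smul_eq_mul]
    have hnorm : (polarCoord.symm p).1 ^ 2 + (polarCoord.symm p).2 ^ 2 = p.1 ^ 2 := by
      simp only [polarCoord_symm_apply, mul_pow, ← mul_add, cos_sq_add_sin_sq, mul_one]
    rw [hnorm, mul_ite, mul_zero]
    rfl
  have hint : Integrable (A.indicator fun p ↦ p.1 * exp (-p.1 ^ 2 / 2))
      ((volume.restrict (Ioi 0)).prod (volume.restrict (Ioo (-π) π))) := by
    have hradial : Integrable (fun r : ℝ ↦ r * exp (-r ^ 2 / 2)) (volume.restrict (Ioi 0)) := by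
      convert (integrable_mul_exp_neg_mul_sq (b := 1 / 2) one_half_pos).restrict using 4
      ring
    exact (hradial.comp_fst _).indicator hA
  rw [cartesian, polar, Measure.volume_eq_prod, ← Measure.prod_restrict, integral_prod_symm _ hint]
  have radial : ∀ φ, ∫ r in Ioi 0, A.indicator (fun p ↦ p.1 * exp (-p.1 ^ 2 / 2)) (r, φ)
      = {φ | 0 < min (cos φ) (sin φ)}.indicator
          (fun φ ↦ exp (-x ^ 2 / (2 * min (cos φ) (sin φ) ^ 2))) φ :=
    fun φ ↦ integral_Ioi_zero_indicator_lt_mul hx (min (cos φ) (sin φ))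
  simp only [radial]
  rw [setIntegral_indicator (measurableSet_lt measurable_const (by fun_prop)),
    Ioo_inter_setOf_zero_lt_min_cos_sin,
    integral_Ioo_zero_pi_div_two_min_cos_sin_sq (fun s ↦ exp (-x ^ 2 / s))]

lemma gaussQ_sq {x : ℝ} (hx : 0 ≤ x) :
    gaussQ x ^ 2
      = (2 * π)⁻¹ * ∫ t in Ioo (-(π / 4)) (π / 4), exp (-x ^ 2 / (1 - |sin (2 * t)|)) := by
  rw [gaussQ, mul_pow, inv_pow, sq_sqrt (by positivity), sq_integral_Ioi_exp_neg_sq_div_two hx]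

lemma ProbabilityTheory.IndepFun.measure_preimage_prodMk {Ω α β : Type*} [MeasurableSpace Ω]
    [MeasurableSpace α] [MeasurableSpace β] {P : Measure Ω} [IsFiniteMeasure P] {X : Ω → α}
    {Y : Ω → β} (hX : Measurable X) (hY : Measurable Y) (hXY : IndepFun X Y P)
    {s : Set (α × β)} (hs : MeasurableSet s) :
    P ((fun ω ↦ (X ω, Y ω)) ⁻¹' s) = ∫⁻ y, P.map X ((fun x ↦ (x, y)) ⁻¹' s) ∂P.map Y := by
  rw [← Measure.map_apply (hX.prodMk hY) hs,
    hXY.map_prod_eq_prod_map_map hX.aemeasurable hY.aemeasurable, Measure.prod_apply_symm hs]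

lemma expMeasure_Iic {r x : ℝ} (hr : 0 < r) (hx : 0 ≤ x) :
    expMeasure r (Iic x) = ENNReal.ofReal (1 - exp (-(r * x))) := by
  have := isProbabilityMeasure_expMeasure hr
  rw [← ofReal_cdf, cdf_expMeasure_eq hr, if_pos hx]

lemma one_sub_abs_sin_two_mul_pos {t : ℝ} (ht : t ∈ Ioo (-(π / 4)) (π / 4)) :
    0 < 1 - |sin (2 * t)| := by
  have hcos : 0 < cos (2 * t) := cos_pos_of_mem_Ioo ⟨by linarith [ht.1], by linarith [ht.2]⟩
  have : sin (2 * t) ^ 2 < 1 := by nlinarith [sin_sq_add_cos_sq (2 * t)]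
  linarith [(sq_lt_one_iff_abs_lt_one _).mp this]

lemma toReal_lintegral_expMeasure_mul_one_sub_abs_sin_le {v : ℝ} (hv : 0 ≤ v) :
    (∫⁻ t, expMeasure 1 {w | w * (1 - |sin (2 * t)|) ≤ v} ∂unifOn (-(π / 4)) (π / 4)).toReal
      = 1 - 2 / π * ∫ t in Ioo (-(π / 4)) (π / 4), exp (-v / (1 - |sin (2 * t)|)) := by
  set k : ℝ → ℝ := fun t ↦ exp (-v / (1 - |sin (2 * t)|))
  have hk_le : ∀ t, k t ≤ 1 := fun t ↦ exp_le_one_iff.mpr <|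
    div_nonpos_of_nonpos_of_nonneg (neg_nonpos.mpr hv) (sub_nonneg.mpr (abs_sin_le_one _))
  have hk : IntegrableOn k (Ioo (-(π / 4)) (π / 4)) :=
    Measure.integrableOn_of_bounded (M := 1) measure_Ioo_lt_top.ne (by fun_prop)
      (ae_of_all _ fun t ↦ by simpa [k, abs_of_pos (exp_pos _)] using hk_le t)
  have hcdf : ∀ t ∈ Ioo (-(π / 4)) (π / 4),
      expMeasure 1 {w | w * (1 - |sin (2 * t)|) ≤ v} = ENNReal.ofReal (1 - k t) := by
    intro t ht
    have hpos := one_sub_abs_sin_two_mul_pos ht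
    have hset : {w | w * (1 - |sin (2 * t)|) ≤ v} = Iic (v / (1 - |sin (2 * t)|)) := by
      ext w
      exact (le_div_iff₀ hpos).symm
    rw [hset, expMeasure_Iic one_pos (div_nonneg hv hpos.le), one_mul, ← neg_div]
  have hπ := pi_pos
  rw [unifOn, lintegral_smul_measure, setLIntegral_congr_fun measurableSet_Ioo hcdf,
    ← ofReal_integral_eq_lintegral_ofReal (f := fun t ↦ 1 - k t)
      ((integrableOn_const measure_Ioo_lt_top.ne).sub hk)
      (ae_of_all _ fun t ↦ sub_nonneg.mpr (hk_le t)),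
    smul_eq_mul, ENNReal.toReal_mul, ENNReal.toReal_inv, ENNReal.toReal_ofReal (by linarith),
    ENNReal.toReal_ofReal
      (setIntegral_nonneg measurableSet_Ioo fun t _ ↦ sub_nonneg.mpr (hk_le t)),
    integral_sub (integrableOn_const measure_Ioo_lt_top.ne).integrable hk, setIntegral_const,
    Real.volume_real_Ioo_of_le (by linarith)]
  field_simp
  ring

/-- Distribution of the per-branch selection statistic `V = W(1 − |sin 2θ|)`:
`P(V ≤ v) = 1 − 4(Q(√v))²` for `v ≥ 0`. -/
theorem stmt10
    {Ω : Type*} [MeasurableSpace Ω] (P : Measure Ω) [IsProbabilityMeasure P]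
    (W θ : Ω → ℝ) (hW : Measurable W) (hθ : Measurable θ)
    (hWlaw : Measure.map W P = expMeasure 1)
    (hθlaw : Measure.map θ P = unifOn (-(π / 4)) (π / 4))
    (hindep : IndepFun W θ P) :
    ∀ v : ℝ, 0 ≤ v →
      (P {ω | W ω * (1 - |Real.sin (2 * θ ω)|) ≤ v}).toReal
        = 1 - 4 * gaussQ (Real.sqrt v) ^ 2 := by
  intro v hv
  set S : Set (ℝ × ℝ) := {p | p.1 * (1 - |sin (2 * p.2)|) ≤ v}
  have hS : MeasurableSet S := measurableSet_le (by fun_prop) measurable_const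
  change (P ((fun ω ↦ (W ω, θ ω)) ⁻¹' S)).toReal = _
  rw [hindep.measure_preimage_prodMk hW hθ hS, hWlaw, hθlaw]
  calc _ = 1 - 2 / π * ∫ t in Ioo (-(π / 4)) (π / 4), exp (-v / (1 - |sin (2 * t)|)) :=
        toReal_lintegral_expMeasure_mul_one_sub_abs_sin_le hv
    _ = 1 - 4 * gaussQ (Real.sqrt v) ^ 2 := by
        rw [gaussQ_sq (sqrt_nonneg v), sq_sqrt hv]
        field_simp
        ring
end

section
/- For every x ≥ 0, (Q(x))² = (1/π) · ∫_0^{π/4} exp( −x² / (2·sin²φ) ) dφ. (The finite-integral representation of the squared Gaussian Q-function, equation (Qsq), used throughout the selection-combining analysis.) -/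
/-!
Both `π Q(x)²` and `∫_0^{π/4} exp(−x²/(2 sin²φ)) dφ` equal `π/4` at `x = 0`, so it suffices that
their derivatives agree for `x > 0`. Differentiating under the integral sign and substituting
`u = x cot φ`, which maps `(0, π/4)` onto `(x, ∞)` with `du = −x dφ / sin²φ` and
`x²/sin²φ = x² + u²`, turns the derivative of the integral into
`−e^{−x²/2} ∫_x^∞ e^{−u²/2} du = −√(2π) e^{−x²/2} Q(x) = π (Q²)'(x)`.
-/

open MeasureTheory Real

open Set Filter

theorem hasDerivAt_integral_Ioi {E : Type*} [NormedAddCommGroup E] [NormedSpace ℝ E]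
    [CompleteSpace E] {f : ℝ → E} (hf : Integrable f) (hfc : Continuous f) (x : ℝ) :
    HasDerivAt (fun a => ∫ t in Ioi a, f t) (-f x) x := by
  have hsplit : (fun a => ∫ t in Ioi a, f t) = fun a => (∫ t in Ioi 0, f t) - ∫ t in 0..a, f t :=
    funext fun a => eq_sub_of_add_eq'
      (intervalIntegral.integral_interval_add_Ioi hf.integrableOn hf.integrableOn)
  rw [hsplit]
  exact (intervalIntegral.integral_hasDerivAt_right hf.intervalIntegrable
    (hfc.stronglyMeasurableAtFilter _ _) hfc.continuousAt).const_sub _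

theorem eq_of_continuousOn_of_hasDerivAt_zero {f : ℝ → ℝ} {a b : ℝ} (hab : a ≤ b)
    (hf : ContinuousOn f (Icc a b)) (hf' : ∀ y ∈ Ioo a b, HasDerivAt f 0 y) : f b = f a := by
  rcases hab.eq_or_lt with rfl | hab
  · rfl
  obtain ⟨c, -, hc⟩ := exists_hasDerivAt_eq_slope f (fun _ => 0) hab hf hf'
  rw [eq_comm, div_eq_zero_iff, sub_eq_zero] at hc
  exact hc.resolve_right (sub_ne_zero.2 hab.ne')

section GaussQ

theorem exp_neg_sq_div_two_eq (t : ℝ) : exp (-t ^ 2 / 2) = exp (-(1 / 2) * t ^ 2) := by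
  ring_nf

theorem integrable_exp_neg_sq_div_two : Integrable fun t : ℝ => exp (-t ^ 2 / 2) := by
  simpa only [exp_neg_sq_div_two_eq] using integrable_exp_neg_mul_sq (b := 1 / 2) (by norm_num)

theorem gaussQ_hasDerivAt (x : ℝ) :
    HasDerivAt gaussQ (-(√(2 * π))⁻¹ * exp (-x ^ 2 / 2)) x :=
  ((hasDerivAt_integral_Ioi integrable_exp_neg_sq_div_two (by fun_prop) x).const_mul
    (√(2 * π))⁻¹).congr_deriv (by ring)

theorem continuous_gaussQ : Continuous gaussQ :=
  continuous_iff_continuousAt.2 fun x => (gaussQ_hasDerivAt x).continuousAt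

theorem gaussQ_zero : gaussQ 0 = 1 / 2 := by
  have hsqrt : √(2 * π) ≠ 0 := by positivity
  rw [gaussQ, funext exp_neg_sq_div_two_eq, integral_gaussian_Ioi,
    show π / (1 / 2) = 2 * π by ring]
  field_simp

end GaussQ

section CotSubstitution

variable {φ : ℝ}

theorem sin_pos_of_mem_Ioo_zero_pi_div_four (hφ : φ ∈ Ioo 0 (π / 4)) : 0 < sin φ :=
  sin_pos_of_pos_of_lt_pi hφ.1 (by linarith [hφ.2, pi_pos])

theorem cos_pos_of_mem_Ioo_zero_pi_div_four (hφ : φ ∈ Ioo 0 (π / 4)) : 0 < cos φ :=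
  cos_pos_of_mem_Ioo ⟨by linarith [hφ.1, pi_pos], by linarith [hφ.2, pi_pos]⟩

theorem tan_mem_Ioo_of_mem_Ioo_zero_pi_div_four (hφ : φ ∈ Ioo 0 (π / 4)) :
    tan φ ∈ Ioo 0 1 := by
  have hπ := pi_pos
  refine ⟨tan_pos_of_pos_of_lt_pi_div_two hφ.1 (by linarith [hφ.2]), ?_⟩
  rw [← tan_pi_div_four]
  exact strictMonoOn_tan ⟨by linarith [hφ.1], by linarith [hφ.2]⟩ ⟨by linarith, by linarith⟩ hφ.2

theorem image_div_tan_Ioo {x : ℝ} (hx : 0 < x) :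
    (fun φ => x / tan φ) '' Ioo 0 (π / 4) = Ioi x := by
  ext u
  constructor
  · rintro ⟨φ, hφ, rfl⟩
    obtain ⟨htan0, htan1⟩ := tan_mem_Ioo_of_mem_Ioo_zero_pi_div_four hφ
    exact (lt_div_iff₀ htan0).2 (mul_lt_of_lt_one_right hx htan1)
  · intro (hu : x < u)
    have hu0 : 0 < u := hx.trans hu
    refine ⟨arctan (x / u), ⟨arctan_pos.2 (by positivity), ?_⟩, ?_⟩
    · rw [← arctan_one]
      exact arctan_strictMono ((div_lt_one hu0).2 hu)
    · simp only [tan_arctan]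
      field_simp

theorem injOn_div_tan {x : ℝ} (hx : x ≠ 0) : InjOn (fun φ => x / tan φ) (Ioo 0 (π / 4)) := by
  have hπ := pi_pos
  intro a ha b hb hab
  refine injOn_tan ⟨by linarith [ha.1], by linarith [ha.2]⟩
    ⟨by linarith [hb.1], by linarith [hb.2]⟩ ?_
  simpa only [div_eq_mul_inv, mul_right_inj' hx, inv_inj] using hab

theorem hasDerivAt_div_tan (x : ℝ) (hsin : sin φ ≠ 0) (hcos : cos φ ≠ 0) :
    HasDerivAt (fun φ => x / tan φ) (-(x / sin φ ^ 2)) φ := by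
  have htan : tan φ ≠ 0 := by rw [tan_eq_sin_div_cos]; positivity
  refine (((hasDerivAt_tan hcos).inv htan).const_mul x).congr_deriv ?_
  rw [tan_eq_sin_div_cos]
  field_simp

theorem integral_Ioi_eq_integral_div_tan {x : ℝ} (hx : 0 < x) (f : ℝ → ℝ) :
    ∫ u in Ioi x, f u = ∫ φ in Ioo 0 (π / 4), x / sin φ ^ 2 * f (x / tan φ) := by
  rw [← image_div_tan_Ioo hx, integral_image_eq_integral_abs_deriv_smul measurableSet_Ioo
    (fun φ hφ => (hasDerivAt_div_tan x (sin_pos_of_mem_Ioo_zero_pi_div_four hφ).ne'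
      (cos_pos_of_mem_Ioo_zero_pi_div_four hφ).ne').hasDerivWithinAt)
    (injOn_div_tan hx.ne')]
  refine setIntegral_congr_fun measurableSet_Ioo fun φ hφ => ?_
  have := sin_pos_of_mem_Ioo_zero_pi_div_four hφ
  rw [smul_eq_mul, abs_neg, abs_of_pos (by positivity)]

end CotSubstitution

section CraigIntegral

noncomputable def craigIntegral (x : ℝ) : ℝ :=
  ∫ φ in Ioo 0 (π / 4), exp (-x ^ 2 / (2 * sin φ ^ 2))

theorem norm_exp_neg_sq_div_le_one (x s : ℝ) : ‖exp (-x ^ 2 / (2 * s ^ 2))‖ ≤ 1 := by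
  rw [norm_of_nonneg (exp_nonneg _), exp_le_one_iff]
  exact div_nonpos_of_nonpos_of_nonneg (by simpa using sq_nonneg x) (by positivity)

theorem div_sq_mul_exp_neg_sq_div_le {x s : ℝ} (hx : 0 < x) (hs : s ≠ 0) :
    x / s ^ 2 * exp (-x ^ 2 / (2 * s ^ 2)) ≤ 2 / x := by
  calc x / s ^ 2 * exp (-x ^ 2 / (2 * s ^ 2))
      = 2 / x * (x ^ 2 / (2 * s ^ 2) * exp (-(x ^ 2 / (2 * s ^ 2)))) := by
        rw [neg_div]; field_simp
    _ ≤ 2 / x * 1 := by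
        gcongr
        exact (mul_exp_neg_le_exp_neg_one _).trans (exp_le_one_iff.2 (by norm_num))
    _ = 2 / x := mul_one _

theorem craigIntegral_zero : craigIntegral 0 = π / 4 := by
  simp only [craigIntegral, ne_eq, OfNat.ofNat_ne_zero, not_false_eq_true, zero_pow, neg_zero,
    zero_div, exp_zero, integral_const, MeasurableSet.univ, measureReal_restrict_apply,
    univ_inter, volume_real_Ioo, sub_zero, smul_eq_mul, mul_one]
  exact max_eq_left (by positivity)

theorem continuous_craigIntegral : Continuous craigIntegral := by
  refine continuous_of_dominated (bound := fun _ => 1)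
    (fun x => (by fun_prop : Measurable _).aestronglyMeasurable)
    (fun x => ae_of_all _ fun φ => norm_exp_neg_sq_div_le_one x (sin φ)) (integrable_const 1) ?_
  rw [ae_restrict_iff' measurableSet_Ioo]
  refine ae_of_all _ fun φ hφ => ?_
  have := (sin_pos_of_mem_Ioo_zero_pi_div_four hφ).ne'
  fun_prop (disch := positivity)

theorem integral_div_sin_sq_mul_exp_eq {x : ℝ} (hx : 0 < x) :
    ∫ φ in Ioo 0 (π / 4), x / sin φ ^ 2 * exp (-x ^ 2 / (2 * sin φ ^ 2))
      = √(2 * π) * exp (-x ^ 2 / 2) * gaussQ x := by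
  have hQ : √(2 * π) * gaussQ x = ∫ u in Ioi x, exp (-u ^ 2 / 2) := by
    rw [gaussQ, ← mul_assoc, mul_inv_cancel₀ (by positivity), one_mul]
  rw [mul_right_comm, hQ, ← integral_mul_const, integral_Ioi_eq_integral_div_tan hx]
  refine setIntegral_congr_fun measurableSet_Ioo fun φ hφ => ?_
  have hsin := (sin_pos_of_mem_Ioo_zero_pi_div_four hφ).ne'
  have hcos := (cos_pos_of_mem_Ioo_zero_pi_div_four hφ).ne'
  rw [← exp_add, tan_eq_sin_div_cos]
  congr 2
  field_simp
  linear_combination sin_sq_add_cos_sq φ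

theorem hasDerivAt_craigIntegral {x₀ : ℝ} (hx₀ : 0 < x₀) :
    HasDerivAt craigIntegral (-(√(2 * π) * exp (-x₀ ^ 2 / 2) * gaussQ x₀)) x₀ := by
  rw [← integral_div_sin_sq_mul_exp_eq hx₀, ← integral_neg]
  refine (hasDerivAt_integral_of_dominated_loc_of_deriv_le (bound := fun _ => 4 / x₀)
    (F' := fun x φ => -(x / sin φ ^ 2 * exp (-x ^ 2 / (2 * sin φ ^ 2))))
    (Metric.ball_mem_nhds x₀ (half_pos hx₀))
    (Eventually.of_forall fun x => (by fun_prop : Measurable _).aestronglyMeasurable)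
    (Integrable.mono' (integrable_const 1) (by fun_prop : Measurable _).aestronglyMeasurable
      (ae_of_all _ fun φ => norm_exp_neg_sq_div_le_one x₀ (sin φ)))
    (by fun_prop : Measurable _).aestronglyMeasurable ?_ (integrable_const _) ?_).2
  all_goals
    rw [ae_restrict_iff' measurableSet_Ioo]
    refine ae_of_all _ fun φ hφ x hx => ?_
    have hsin := (sin_pos_of_mem_Ioo_zero_pi_div_four hφ).ne'
    rw [Metric.mem_ball, Real.dist_eq, abs_lt] at hx
  · have hx0 : 0 < x := by linarith
    rw [norm_neg, norm_of_nonneg (by positivity)]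
    calc _ ≤ 2 / x := div_sq_mul_exp_neg_sq_div_le hx0 hsin
      _ ≤ 4 / x₀ := by rw [div_le_div_iff₀ hx0 hx₀]; linarith
  · have hinner : HasDerivAt (fun x => -x ^ 2 / (2 * sin φ ^ 2)) (-x / sin φ ^ 2) x :=
      ((hasDerivAt_pow 2 x).neg.div_const _).congr_deriv (by field_simp; ring)
    exact hinner.exp.congr_deriv (by ring)

end CraigIntegral

theorem pi_mul_gaussQ_sq_eq_craigIntegral {x : ℝ} (hx : 0 ≤ x) :
    π * gaussQ x ^ 2 = craigIntegral x := by
  let D := fun y => π * gaussQ y ^ 2 - craigIntegral y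
  have hD0 : D 0 = 0 := by
    simp only [D, gaussQ_zero, craigIntegral_zero]
    ring
  have hD' : ∀ y ∈ Ioo 0 x, HasDerivAt D 0 y := fun y hy =>
    ((((gaussQ_hasDerivAt y).pow 2).const_mul π).sub (hasDerivAt_craigIntegral hy.1)).congr_deriv
      (by
        have hsqrt : 2 * π * (√(2 * π))⁻¹ = √(2 * π) := by rw [← div_eq_mul_inv, div_sqrt]
        linear_combination (-(gaussQ y * exp (-y ^ 2 / 2))) * hsqrt)
  have hDcont : Continuous D :=
    (continuous_const.mul (continuous_gaussQ.pow 2)).sub continuous_craigIntegral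
  exact sub_eq_zero.1 ((eq_of_continuousOn_of_hasDerivAt_zero hx hDcont.continuousOn hD').trans hD0)

/-- The finite-integral representation of the squared Gaussian Q-function:
`(Q(x))² = (1/π) ∫_0^{π/4} exp(−x²/(2 sin²φ)) dφ` for `x ≥ 0`. -/
theorem stmt11 (x : ℝ) (hx : 0 ≤ x) :
    gaussQ x ^ 2
      = (1 / π) * ∫ φ in (0 : ℝ)..(π / 4), Real.exp (-x ^ 2 / (2 * Real.sin φ ^ 2)) := by
  rw [intervalIntegral.integral_of_le (by positivity), integral_Ioc_eq_integral_Ioo,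
    ← craigIntegral, ← pi_mul_gaussQ_sq_eq_craigIntegral hx]
  field_simp
end

section
/- Let N ≥ 1 and set k = ⌈N/2⌉. For ρ > 0 define P̃₁(ρ) = (1/π)·arctan(ρ^{−1/2}) and P(ρ) = Σ_{i=k}^{2k−1} C(2k−1, i) · (P̃₁(ρ))^i · (1 − P̃₁(ρ))^{2k−1−i}, where C(·,·) is the binomial coefficient. Then, as ρ → ∞, 2·P(ρ) − (P(ρ))² = C(2k, k) · (π² · ρ)^{−k/2} + o(ρ^{−k/2}). (High-SNR part of Proposition 5: the QPSK-modulated 2-bit phase-quantized SIMO system with 2-bit quantized CSIR and majority decision achieves diversity gain (1/2)·⌈N/2⌉ and coding gain π²·C(2⌈N/2⌉, ⌈N/2⌉)^{−2/⌈N/2⌉}.) -/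
/-!
Since `arctan x ~ x` at `0`, `P̃₁(ρ) ~ (π √ρ)⁻¹ → 0`. In the binomial tail `P` every term with
`i > k` is negligible against `P̃₁^k`, so `P ~ C(2k-1, k) P̃₁^k`; as `P → 0` also
`2P - P² ~ 2P`, and `2 C(2k-1, k) = C(2k, k)`.
-/

open Real Filter Asymptotics Topology

theorem Real.isEquivalent_arctan : arctan ~[𝓝 0] id := by
  simpa using! (hasDerivAt_arctan 0).isLittleO

theorem Real.rpow_neg_natCast_div_two {x : ℝ} (hx : 0 ≤ x) (k : ℕ) :
    x ^ (-(k : ℝ) / 2) = (√x)⁻¹ ^ k := by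
  rw [sqrt_eq_rpow, ← rpow_neg hx, ← rpow_natCast, ← rpow_mul hx]
  ring_nf

theorem Nat.choose_two_mul_eq_two_mul_choose {k : ℕ} (hk : 0 < k) :
    (2 * k).choose k = 2 * (2 * k - 1).choose k := by
  obtain ⟨m, rfl⟩ : ∃ m, k = m + 1 := ⟨k - 1, by omega⟩
  rw [show 2 * (m + 1) = 2 * m + 1 + 1 by ring, Nat.add_sub_cancel, Nat.choose_succ_succ',
    Nat.choose_symm_half]
  ring

section

variable {α 𝕜 : Type*} [NormedField 𝕜] [CharZero 𝕜] {l : Filter α} {p : α → 𝕜}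

theorem isEquivalent_sum_Icc_binomial (hp : Tendsto p l (𝓝 0)) {k n : ℕ} (hkn : k ≤ n) :
    (fun x => ∑ i ∈ Finset.Icc k n, (n.choose i : 𝕜) * p x ^ i * (1 - p x) ^ (n - i))
      ~[l] fun x => (n.choose k : 𝕜) * p x ^ k := by
  have hq : Tendsto (fun x => 1 - p x) l (𝓝 1) := by simpa using tendsto_const_nhds.sub hp
  have hC : (n.choose k : 𝕜) ≠ 0 := Nat.cast_ne_zero.2 (Nat.choose_pos hkn).ne'
  have hlead : (fun x => (n.choose k : 𝕜) * p x ^ k * (1 - p x) ^ (n - k))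
      ~[l] fun x => (n.choose k : 𝕜) * p x ^ k := by
    have h1 : (fun x => (1 - p x) ^ (n - k)) ~[l] fun _ => 1 :=
      (isEquivalent_const_iff_tendsto one_ne_zero).2 (by simpa using hq.pow (n - k))
    simpa [Pi.mul_def] using (IsEquivalent.refl (u := fun x => (n.choose k : 𝕜) * p x ^ k)).mul h1
  have htail : ∀ i ∈ Finset.Ioc k n,
      (fun x => (n.choose i : 𝕜) * p x ^ i * (1 - p x) ^ (n - i))
        =o[l] fun x => (n.choose k : 𝕜) * p x ^ k := by
    intro i hi
    have hpow : (fun x => p x ^ i) =o[l] fun x => p x ^ k :=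
      (isLittleO_pow_pow (Finset.mem_Ioc.1 hi).1).comp_tendsto hp
    have := (hpow.const_mul_left (n.choose i : 𝕜)).mul_isBigO ((hq.pow (n - i)).isBigO_one 𝕜)
    simpa using this.trans_isBigO ((isBigO_refl _ l).const_mul_right hC)
  simp_rw [← Finset.Ioc_insert_left hkn, Finset.sum_insert Finset.left_notMem_Ioc]
  exact hlead.add_isLittleO (IsLittleO.fun_sum htail)

theorem isEquivalent_two_mul_sub_sq (hp : Tendsto p l (𝓝 0)) :
    (fun x => 2 * p x - p x ^ 2) ~[l] fun x => 2 * p x := by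
  have h : Tendsto (fun x => 2 - p x) l (𝓝 2) := by simpa using tendsto_const_nhds.sub hp
  have := (IsEquivalent.refl (u := p)).mul ((isEquivalent_const_iff_tendsto two_ne_zero).2 h)
  refine (this.congr_left (Eventually.of_forall fun x => ?_)).congr_right
    (Eventually.of_forall fun x => ?_) <;> simp <;> ring

end

theorem isEquivalent_inv_pi_mul_arctan_inv_sqrt :
    (fun ρ => 1 / π * arctan (√ρ)⁻¹) ~[atTop] fun ρ => π⁻¹ * (√ρ)⁻¹ := by
  have hs : Tendsto (fun ρ : ℝ => (√ρ)⁻¹) atTop (𝓝 0) :=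
    tendsto_inv_atTop_zero.comp tendsto_sqrt_atTop
  simpa [Function.comp_def, Pi.mul_def] using
    (IsEquivalent.refl (u := fun _ : ℝ => π⁻¹)).mul (isEquivalent_arctan.comp_tendsto hs)

theorem two_mul_choose_mul_inv_pi_mul_inv_sqrt_pow {k : ℕ} (hk : 0 < k) {ρ : ℝ} (hρ : 0 ≤ ρ) :
    2 * ((2 * k - 1).choose k * (π⁻¹ * (√ρ)⁻¹) ^ k)
      = (2 * k).choose k * (π ^ 2 * ρ) ^ (-(k : ℝ) / 2) := by
  rw [rpow_neg_natCast_div_two (by positivity), sqrt_mul (by positivity), sqrt_sq pi_pos.le,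
    Nat.choose_two_mul_eq_two_mul_choose hk, mul_inv]
  push_cast
  ring

theorem isBigO_const_mul_rpow_const_mul (c : ℝ) {a : ℝ} (ha : 0 ≤ a) (r : ℝ) :
    (fun ρ => c * (a * ρ) ^ r) =O[atTop] fun ρ => ρ ^ r := by
  refine ((isBigO_refl _ _).const_mul_left (c * a ^ r)).congr' ?_ EventuallyEq.rfl
  filter_upwards [eventually_ge_atTop 0] with ρ hρ
  rw [mul_rpow ha hρ, mul_assoc]

/-- High-SNR part of Proposition 5: the QPSK-modulated 2-bit phase-quantized SIMO system with
2-bit quantized CSIR and majority decision achieves diversity gain `⌈N/2⌉/2` and coding gain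
`π²·C(2⌈N/2⌉, ⌈N/2⌉)^{−2/⌈N/2⌉}`.  Here `k = ⌈N/2⌉ = (N+1)/2` (natural division). -/
theorem stmt14 (N : ℕ) (hN : 1 ≤ N) (k : ℕ) (hk : k = (N + 1) / 2)
    (P1 Pf : ℝ → ℝ)
    (hP1 : ∀ ρ, P1 ρ = (1 / π) * Real.arctan ((Real.sqrt ρ)⁻¹))
    (hPf : ∀ ρ, Pf ρ = ∑ i ∈ Finset.Icc k (2 * k - 1),
        ((2 * k - 1).choose i : ℝ) * P1 ρ ^ i * (1 - P1 ρ) ^ (2 * k - 1 - i)) :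
    (fun ρ => (2 * Pf ρ - Pf ρ ^ 2)
        - ((2 * k).choose k : ℝ) * (π ^ 2 * ρ) ^ (-(k : ℝ) / 2))
      =o[atTop] fun ρ : ℝ => ρ ^ (-(k : ℝ) / 2) := by
  have hk0 : 0 < k := by omega
  have hP1s : P1 ~[atTop] fun ρ => π⁻¹ * (√ρ)⁻¹ :=
    funext hP1 ▸ isEquivalent_inv_pi_mul_arctan_inv_sqrt
  have hP1_0 : Tendsto P1 atTop (𝓝 0) := hP1s.symm.tendsto_nhds <| by
    simpa using (tendsto_inv_atTop_zero.comp tendsto_sqrt_atTop).const_mul π⁻¹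
  have hPf_lead : Pf ~[atTop] fun ρ => ((2 * k - 1).choose k : ℝ) * P1 ρ ^ k :=
    funext hPf ▸ isEquivalent_sum_Icc_binomial hP1_0 (by omega)
  have hPf_0 : Tendsto Pf atTop (𝓝 0) := hPf_lead.symm.tendsto_nhds <| by
    simpa [hk0.ne'] using (hP1_0.pow k).const_mul ((2 * k - 1).choose k : ℝ)
  have hPf_eqv : Pf ~[atTop] fun ρ => ((2 * k - 1).choose k : ℝ) * (π⁻¹ * (√ρ)⁻¹) ^ k :=
    hPf_lead.trans ((IsEquivalent.refl (u := fun _ => _)).mul (hP1s.pow k))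
  have hmain : (fun ρ => 2 * Pf ρ - Pf ρ ^ 2)
      ~[atTop] fun ρ => ((2 * k).choose k : ℝ) * (π ^ 2 * ρ) ^ (-(k : ℝ) / 2) := by
    refine ((isEquivalent_two_mul_sub_sq hPf_0).trans
      ((IsEquivalent.refl (u := fun _ => 2)).mul hPf_eqv)).congr_right ?_
    filter_upwards [eventually_ge_atTop 0] with ρ hρ
    exact two_mul_choose_mul_inv_pi_mul_inv_sqrt_pow hk0 hρ
  exact hmain.isLittleO.trans_isBigO (isBigO_const_mul_rpow_const_mul _ (by positivity) _)
end
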